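/- Let (Γ,φ) be an incidence gain graph whose underlying incidence structure (P,B,I) is a linear space, with gain group acting on a nonempty set Λ. If 𝔐(Γ,φ) is a generalized quadrangle, then for every line b ∈ B, the set P_b of points incident with b has the same cardinality as Λ; in particular, all lines of (P,B,I) have the same number of points, so (P,B,I) is a Steiner system S(2,v,k). -/

import Mathlib

/-!
Fix a line `b`, a point `p` off `b` and `λ ∈ Λ`. In 𝔐(Γ,φ) the point `y_{b,λ}` is incident with
no line `z_{p,μ}`; since point–line distances are odd, in a generalized quadrangle the two are
joined by a unique chain of length `3`. Such a chain is forced to be the lift of a walk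
`(b, q, b', p)` with `q` on `b`, and it ends at `z_{p,μ}` with `μ = ρ_{b,p,λ}(q)`. Existence of
the chains makes `ρ_{b,p,λ}` surjective and their uniqueness makes it injective, so `P_b ≃ Λ`.
-/

open Classical

/-- An incidence structure: points `P`, lines `B`, incidence relation `inc`. -/
structure IncStruct (P B : Type*) where
  inc : P → B → Prop

namespace IncStruct

variable {P B : Type*}

/-- Adjacency in the incidence graph on `P ⊕ B`. -/
def adj (S : IncStruct P B) : P ⊕ B → P ⊕ B → Prop
  | Sum.inl p, Sum.inr b => S.inc p b
  | Sum.inr b, Sum.inl p => S.inc p b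
  | _, _ => False

/-- `c` is a `k`-chain from `u` to `v`: a list of `k+1` elements, starting at `u`,
ending at `v`, with consecutive elements incident. -/
def IsNChain (S : IncStruct P B) (k : ℕ) (u v : P ⊕ B) (c : List (P ⊕ B)) : Prop :=
  c.length = k + 1 ∧ c.head? = some u ∧ c.getLast? = some v ∧ c.Chain' S.adj

/-- Distance between two elements of an incidence structure: the least length of a
chain from `u` to `v`, or `∞` if there is none. -/
noncomputable def dist (S : IncStruct P B) (u v : P ⊕ B) : ℕ∞ :=
  sInf {n : ℕ∞ | ∃ (k : ℕ) (c : List (P ⊕ B)), n = (k : ℕ∞) ∧ S.IsNChain k u v c}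

/-- A linear space: two distinct points lie on a unique common line, every line has
at least two points, and some point-line pair is non-incident. -/
def IsLinearSpace (S : IncStruct P B) : Prop :=
  (∀ p q : P, p ≠ q → ∃! b : B, S.inc p b ∧ S.inc q b) ∧
  (∀ b : B, ∃ p q : P, p ≠ q ∧ S.inc p b ∧ S.inc q b) ∧
  (∃ (p : P) (b : B), ¬ S.inc p b)

/-- A generalized quadrangle: all distances are at most `4`, and whenever
`d(u,v) = k < 4` there is a unique `k`-chain from `u` to `v`. -/
def IsGQ (S : IncStruct P B) : Prop :=
  (∀ u v : P ⊕ B, S.dist u v ≤ 4) ∧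
  ∀ (u v : P ⊕ B) (k : ℕ), k < 4 → S.dist u v = (k : ℕ∞) →
    ∃! c : List (P ⊕ B), S.IsNChain k u v c

end IncStruct

section Construction

variable {P B G : Type*} [Group G]

/-- Incidence of Construction 𝔐: points are `P ⊕ B × Λ` (the `x_p` and `y_{b,λ}`),
lines are `P × Λ` (the `z_{p,μ}`); `x_p I' z_{p,λ}` always, and
`y_{b,λ} I' z_{p,μ}` iff `b I p` and `μ = φ(bp) • λ`. -/
def Minc (S : IncStruct P B) (φ : B → P → G) (Λ : Type*) [MulAction G Λ] :
    P ⊕ B × Λ → P × Λ → Prop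
  | Sum.inl q, (p, _) => q = p
  | Sum.inr (b, l), (p, m) => S.inc p b ∧ m = φ b p • l

/-- The incidence structure 𝔐(Γ,φ) of Construction 𝔐. -/
def MStruct (S : IncStruct P B) (φ : B → P → G) (Λ : Type*) [MulAction G Λ] :
    IncStruct (P ⊕ B × Λ) (P × Λ) := ⟨Minc S φ Λ⟩

/-- The gain `ρ_{b,p}(q) = φ(b'p) φ(b'q)⁻¹ φ(bq)` of the walk `(b, q, b', p)`,
where `b'` is the (unique, in a linear space) line through `p` and `q`. -/
noncomputable def rho (S : IncStruct P B) (φ : B → P → G) (b : B) (p q : P) : G :=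
  if h : ∃ b' : B, S.inc p b' ∧ S.inc q b' then
    φ h.choose p * (φ h.choose q)⁻¹ * φ b q
  else 1

end Construction

namespace IncStruct

variable {P B : Type*} {S : IncStruct P B}

theorem IsLinearSpace.exists_not_inc (hS : S.IsLinearSpace) (b : B) : ∃ p, ¬ S.inc p b := by
  by_contra! h
  obtain ⟨p₀, b₀, hp₀⟩ := hS.2.2
  obtain ⟨x, y, hxy, hx, hy⟩ := hS.2.1 b₀
  obtain ⟨_, _, huniq⟩ := hS.1 x y hxy
  exact hp₀ (huniq b₀ ⟨hx, hy⟩ ▸ huniq b ⟨h x, h y⟩ ▸ h p₀)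

theorem isLeft_ne_of_adj {u v : P ⊕ B} (h : S.adj u v) : u.isLeft ≠ v.isLeft := by
  cases u <;> cases v <;> simp_all [adj]

theorem IsNChain.even_iff {k : ℕ} {u v : P ⊕ B} {c : List (P ⊕ B)} (h : S.IsNChain k u v c) :
    Even k ↔ u.isLeft = v.isLeft := by
  induction k generalizing u c with
  | zero =>
    obtain ⟨hlen, hhead, hlast, -⟩ := h
    obtain ⟨x, rfl⟩ := List.length_eq_one_iff.mp hlen
    simp_all
  | succ k ih =>
    obtain ⟨hlen, hhead, hlast, hchain⟩ := h
    obtain ⟨x, y, rest, rfl⟩ : ∃ x y rest, c = x :: y :: rest := by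
      rcases c with _ | ⟨x, _ | ⟨y, rest⟩⟩ <;> simp_all
    obtain rfl : x = u := by simpa using hhead
    obtain ⟨huy, htail⟩ := List.isChain_cons_cons.mp hchain
    have hy : S.IsNChain k y v (y :: rest) :=
      ⟨by simpa using hlen, rfl, by simpa [List.getLast?_cons_cons] using hlast, htail⟩
    rw [Nat.even_add_one, ih hy]
    have hxy := isLeft_ne_of_adj huy
    revert hxy
    cases x.isLeft <;> cases y.isLeft <;> cases v.isLeft <;> decide

theorem three_le_and_odd_of_isNChain {a : P} {z : B} (haz : ¬ S.inc a z) {k : ℕ}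
    {c : List (P ⊕ B)} (h : S.IsNChain k (.inl a) (.inr z) c) : 3 ≤ k ∧ Odd k := by
  have hodd : Odd k := Nat.not_even_iff_odd.mp (by simp [h.even_iff])
  refine ⟨?_, hodd⟩
  obtain rfl | hk : k = 1 ∨ 3 ≤ k := by
    obtain ⟨j, rfl⟩ := hodd
    omega
  · obtain ⟨hlen, hhead, hlast, hchain⟩ := h
    obtain ⟨x, y, rfl⟩ := List.length_eq_two.mp hlen
    simp only [List.head?_cons, List.getLast?_cons_cons, List.getLast?_singleton,
      Option.some.injEq] at hhead hlast
    subst hhead hlast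
    exact absurd (List.isChain_pair.mp hchain) haz
  · exact hk

theorem exists_isNChain_of_dist_ne_top {u v : P ⊕ B} (h : S.dist u v ≠ ⊤) :
    ∃ (k : ℕ) (c : List (P ⊕ B)), S.dist u v = k ∧ S.IsNChain k u v c := by
  have hne : {n : ℕ∞ | ∃ (k : ℕ) (c : List (P ⊕ B)), n = k ∧ S.IsNChain k u v c}.Nonempty := by
    by_contra hempty
    exact h (by rw [dist, Set.not_nonempty_iff_eq_empty.mp hempty, sInf_empty])
  obtain ⟨k, c, hk, hc⟩ := csInf_mem hne
  exact ⟨k, c, hk, hc⟩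

theorem IsGQ.existsUnique_isNChain_three (hS : S.IsGQ) {a : P} {z : B} (haz : ¬ S.inc a z) :
    ∃! c, S.IsNChain 3 (.inl a) (.inr z) c := by
  have h4 := hS.1 (.inl a) (.inr z)
  obtain ⟨k, c, hk, hc⟩ := exists_isNChain_of_dist_ne_top (ne_top_of_le_ne_top (by decide) h4)
  obtain ⟨h3, hodd⟩ := three_le_and_odd_of_isNChain haz hc
  have hk4 : k ≤ 4 := by exact_mod_cast hk ▸ h4
  obtain rfl : k = 3 := by
    interval_cases k
    · rfl
    · exact absurd hodd (by decide)
  exact hS.2 _ _ 3 (by norm_num) hk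

end IncStruct

section Construction

variable {P B G Λ : Type*} [Group G] [MulAction G Λ] {S : IncStruct P B} {φ : B → P → G}

/-- The gain of the walk `(b, q, b', p)`. -/
def walkGain (φ : B → P → G) (b b' : B) (q p : P) : G :=
  φ b' p * (φ b' q)⁻¹ * φ b q

/-- The lift `(y_{b,λ}, z_{q,μ}, y_{b',ν}, z_{p,ρ})` of the walk `(b, q, b', p)` to 𝔐(Γ,φ). -/
def walkChain (φ : B → P → G) (b b' : B) (q p : P) (l : Λ) :
    List ((P ⊕ B × Λ) ⊕ (P × Λ)) :=
  [.inl (.inr (b, l)), .inr (q, φ b q • l), .inl (.inr (b', ((φ b' q)⁻¹ * φ b q) • l)),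
    .inr (p, walkGain φ b b' q p • l)]

theorem rho_eq_walkGain (hS : S.IsLinearSpace) {b b' : B} {p q : P} (hpq : p ≠ q)
    (hp : S.inc p b') (hq : S.inc q b') : rho S φ b p q = walkGain φ b b' q p := by
  have hex : ∃ b', S.inc p b' ∧ S.inc q b' := ⟨b', hp, hq⟩
  obtain ⟨_, _, huniq⟩ := hS.1 p q hpq
  have hline : hex.choose = b' := huniq _ hex.choose_spec ▸ huniq b' ⟨hp, hq⟩ ▸ rfl
  rw [rho, dif_pos hex, hline, walkGain]

theorem isNChain_walkChain {b b' : B} {p q : P} (hqb : S.inc q b) (hqb' : S.inc q b')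
    (hpb' : S.inc p b') (l : Λ) :
    (MStruct S φ Λ).IsNChain 3 (.inl (.inr (b, l))) (.inr (p, walkGain φ b b' q p • l))
      (walkChain φ b b' q p l) := by
  refine ⟨rfl, rfl, rfl, ?_⟩
  change List.IsChain (MStruct S φ Λ).adj _
  simp only [walkChain, List.isChain_cons_cons, List.isChain_singleton, and_true]
  refine ⟨⟨hqb, rfl⟩, ⟨hqb', ?_⟩, ⟨hpb', ?_⟩⟩
  · rw [smul_smul, mul_inv_cancel_left]
  · rw [walkGain, smul_smul, mul_assoc]

theorem exists_walkGain_of_isNChain {b : B} {p : P} (hpb : ¬ S.inc p b) {l μ : Λ}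
    {c : List ((P ⊕ B × Λ) ⊕ (P × Λ))}
    (hc : (MStruct S φ Λ).IsNChain 3 (.inl (.inr (b, l))) (.inr (p, μ)) c) :
    ∃ q b', S.inc q b ∧ S.inc q b' ∧ S.inc p b' ∧ μ = walkGain φ b b' q p • l := by
  obtain ⟨hlen, hhead, hlast, hchain⟩ := hc
  obtain ⟨x₀, x₁, x₂, x₃, rfl⟩ := List.length_eq_four.mp hlen
  obtain rfl : x₀ = _ := by simpa using hhead
  obtain rfl : x₃ = _ := by simpa using hlast
  change List.IsChain (MStruct S φ Λ).adj _ at hchain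
  obtain ⟨h₀₁, h₁₂, h₂₃⟩ := by
    simpa only [List.isChain_cons_cons, List.isChain_singleton, and_true] using hchain
  rcases x₁ with _ | ⟨q, ν⟩
  · exact (h₀₁ : False).elim
  rcases x₂ with (q' | ⟨b', ν'⟩) | _
  · obtain ⟨hqb, -⟩ : S.inc q b ∧ _ := h₀₁
    obtain rfl : q' = q := h₁₂
    obtain rfl : q' = p := h₂₃
    exact absurd hqb hpb
  · obtain ⟨hqb, rfl⟩ : S.inc q b ∧ ν = φ b q • l := h₀₁
    obtain ⟨hqb', hν⟩ : S.inc q b' ∧ φ b q • l = φ b' q • ν' := h₁₂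
    obtain ⟨hpb', rfl⟩ : S.inc p b' ∧ μ = φ b' p • ν' := h₂₃
    refine ⟨q, b', hqb, hqb', hpb', ?_⟩
    rw [walkGain, mul_smul, mul_smul, hν, inv_smul_smul]
  · exact (h₁₂ : False).elim

theorem bijective_rho_smul_of_isGQ (hS : S.IsLinearSpace) (hM : (MStruct S φ Λ).IsGQ)
    {b : B} {p : P} (hpb : ¬ S.inc p b) (l : Λ) :
    Function.Bijective fun q : {q // S.inc q b} => rho S φ b p q • l := by
  have hline : ∀ q : {q // S.inc q b}, ∃ b', S.inc q b' ∧ S.inc p b' ∧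
      rho S φ b p q = walkGain φ b b' q p := by
    rintro ⟨q, hq⟩
    have hpq : p ≠ q := fun h => hpb (h ▸ hq)
    obtain ⟨b', ⟨hp, hq'⟩, -⟩ := hS.1 p q hpq
    exact ⟨b', hq', hp, rho_eq_walkGain hS hpq hp hq'⟩
  have hunique (μ : Λ) :=
    hM.existsUnique_isNChain_three (a := .inr (b, l)) (z := (p, μ)) fun h => hpb h.1
  constructor
  · intro q₁ q₂ (hq : rho S φ b p q₁ • l = rho S φ b p q₂ • l)
    obtain ⟨b₁, hqb₁, hpb₁, hρ₁⟩ := hline q₁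
    obtain ⟨b₂, hqb₂, hpb₂, hρ₂⟩ := hline q₂
    have hc₁ := isNChain_walkChain (φ := φ) q₁.2 hqb₁ hpb₁ l
    have hc₂ := isNChain_walkChain (φ := φ) q₂.2 hqb₂ hpb₂ l
    rw [← hρ₁] at hc₁
    rw [← hρ₂, ← hq] at hc₂
    have := (hunique _).unique hc₁ hc₂
    simp only [walkChain, List.cons.injEq, Sum.inr.injEq, Prod.mk.injEq] at this
    exact Subtype.ext this.2.1.1
  · intro μ
    obtain ⟨c, hc, -⟩ := hunique μ
    obtain ⟨q, b', hqb, hqb', hpb', rfl⟩ := exists_walkGain_of_isNChain hpb hc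
    have hpq : p ≠ q := by rintro rfl; exact hpb hqb
    exact ⟨⟨q, hqb⟩, congrArg (· • l) (rho_eq_walkGain hS hpq hpb' hqb')⟩

end Construction

/-- if 𝔐(Γ,φ) is a generalized quadrangle, then every line `b` of the
linear space has point set `P_b` of the same cardinality as `Λ`; in particular all
lines have equally many points, so `(P,B,I)` is a Steiner system `S(2,v,k)`. -/
theorem lines_equinumerous_with_Lambda {P B G Λ : Type*} [Group G] [MulAction G Λ]
    [Nonempty Λ] (S : IncStruct P B) (φ : B → P → G) (hLS : S.IsLinearSpace)
    (hGQ : (MStruct S φ Λ).IsGQ) :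
    (∀ b : B, Nonempty ({q : P // S.inc q b} ≃ Λ)) ∧
    ∀ b b' : B, Nonempty ({q : P // S.inc q b} ≃ {q : P // S.inc q b'}) := by
  have hΛ (b : B) : Nonempty ({q : P // S.inc q b} ≃ Λ) := by
    obtain ⟨p, hpb⟩ := hLS.exists_not_inc b
    exact ⟨.ofBijective _ (bijective_rho_smul_of_isGQ hLS hGQ hpb (Classical.arbitrary Λ))⟩
  exact ⟨hΛ, fun b b' => ⟨(hΛ b).some.trans (hΛ b').some.symm⟩⟩
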